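/- Let M₁ and M₂ be adjacent perfect matchings of K_{2m} (so their symmetric difference C is a cycle of length 4) and let e be any edge of K_{2m}. If e is incident with two vertices of C then M₁*e = M₂*e; otherwise M₁*e and M₂*e are adjacent in 𝒫_m. -/

import Mathlib

open SimpleGraph

/-- A simple graph on `Fin n` is a perfect matching if every vertex is
incident with exactly one edge, i.e. has a unique neighbor. -/
def IsPerfMatching {n : ℕ} (M : SimpleGraph (Fin n)) : Prop :=
  ∀ v, ∃! w, M.Adj v w

/-- A simple graph is (i.e. its edges form) a single cycle of length `n`:
there is a cycle of length `n` passing through all of its edges. -/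
def IsCycleGraphOfLength {V : Type*} (G : SimpleGraph V) (n : ℕ) : Prop :=
  ∃ (v : V) (p : G.Walk v v), p.IsCycle ∧ p.length = n ∧ ∀ e ∈ G.edgeSet, e ∈ p.edges

/-- Two perfect matchings are adjacent in the matching graph `𝒫ₘ` iff they are
distinct and their symmetric difference is a cycle of length four. -/
def MatchAdj {n : ℕ} (M₁ M₂ : SimpleGraph (Fin n)) : Prop :=
  M₁ ≠ M₂ ∧ IsCycleGraphOfLength (symmDiff M₁ M₂) 4

/-- Vertices of the graph `𝒫ₘ`: all perfect matchings of `K_{2m}`. -/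
abbrev PMVertex (m : ℕ) := {M : SimpleGraph (Fin (2 * m)) // IsPerfMatching M}

/-- The graph `𝒫ₘ` of perfect matchings of `K_{2m}`. -/
def matchingGraph (m : ℕ) : SimpleGraph (PMVertex m) where
  Adj M₁ M₂ := MatchAdj M₁.1 M₂.1
  symm := ⟨by
    rintro M₁ M₂ ⟨hne, hc⟩
    exact ⟨hne.symm, by rwa [symmDiff_comm]⟩⟩
  loopless := ⟨fun M h => h.1 rfl⟩

/-- The number of geodesics (shortest paths) between two vertices of a graph. -/
noncomputable def geodesicCount {V : Type*} (G : SimpleGraph V) (u v : V) : ℕ :=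
  Nat.card {p : G.Walk u v // p.IsPath ∧ p.length = G.dist u v}
/-- The unique neighbor of `v` in a (perfect) matching `M`
(junk value `v` itself if `v` has no neighbor). -/
noncomputable def matchOf {V : Type*} (M : SimpleGraph V) (v : V) : V := by
  classical
  exact if h : ∃ w, M.Adj v w then h.choose else v

/-- Insertion `M * e` of an edge `e = {v₁, v₂}` into a perfect matching `M`:
if `e ∈ M` then `M * e = M`; otherwise the edges `{v₁, v₃}` and `{v₂, v₄}` of `M`
incident with `v₁` and `v₂` are deleted and the edges `{v₁, v₂}` and `{v₃, v₄}`
are added. -/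
noncomputable def insertEdge {V : Type*} (M : SimpleGraph V) (e : Sym2 V) : SimpleGraph V := by
  classical
  exact if e ∈ M.edgeSet then M
  else SimpleGraph.fromEdgeSet
    ({f | f ∈ M.edgeSet ∧ ∀ v ∈ e, v ∉ f} ∪ {e, Sym2.map (matchOf M) e})

/-- Iterated insertion `M * (e₁, …, eₙ) = (M * (e₁, …, eₙ₋₁)) * eₙ`. -/
noncomputable def insertEdges {V : Type*} (M : SimpleGraph V) (l : List (Sym2 V)) :
    SimpleGraph V :=
  l.foldl insertEdge M

/-! For a perfect matching `M` with partner map `σ`, inserting `s(x, y)` conjugates `M` by the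
transposition of `y` and `σ x`. If `x` lies off the 4-cycle `C = M₁ ∆ M₂`, then `σ₁ x = σ₂ x`, so
`M₁` and `M₂` are conjugated by the same transposition, which carries the 4-cycle along. If `x` and
`y` both lie on `C`, then `M₁ * e` and `M₂ * e` agree off `C` and both pair `x` with `y`, so their
symmetric difference lives on the two remaining vertices of `C`; but a nonempty symmetric
difference of two perfect matchings has at least three vertices. -/

namespace SimpleGraph

variable {V W : Type*} {M M₁ M₂ : SimpleGraph V}

theorem symmDiff_adj {G H : SimpleGraph V} {u v : V} :
    (symmDiff G H).Adj u v ↔ (G.Adj u v ∧ ¬H.Adj u v) ∨ (H.Adj u v ∧ ¬G.Adj u v) := by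
  simp only [symmDiff_def, sup_adj, sdiff_adj]

theorem comap_symmDiff (f : W → V) (G H : SimpleGraph V) :
    (symmDiff G H).comap f = symmDiff (G.comap f) (H.comap f) := by
  ext u v
  simp only [comap_adj, symmDiff_adj]

theorem IsCycleGraphOfLength.comap {G : SimpleGraph V} {n : ℕ} (f : W ≃ V)
    (hG : IsCycleGraphOfLength G n) : IsCycleGraphOfLength (G.comap f) n := by
  obtain ⟨v, p, hcyc, hlen, hedges⟩ := hG
  let φ := (Iso.comap f G).symm
  refine ⟨φ v, p.map φ.toHom, hcyc.map φ.injective, by simp [hlen], fun e he => ?_⟩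
  have : Sym2.map f e ∈ p.edges := hedges _ (by induction e using Sym2.ind; simpa using he)
  rw [Walk.edges_map, List.mem_map]
  exact ⟨_, this, by simp [φ, Sym2.map_map, Function.comp_def]⟩

theorem IsCycleGraphOfLength.exists_finset_support_subset {G : SimpleGraph V} {n : ℕ}
    (hG : IsCycleGraphOfLength G n) : ∃ F : Finset V, F.card ≤ n ∧ G.support ⊆ F := by
  classical
  obtain ⟨v, p, hcyc, hlen, hedges⟩ := hG
  refine ⟨p.support.tail.toFinset, ?_, fun u ⟨w, huw⟩ => ?_⟩
  · calc p.support.tail.toFinset.card ≤ p.support.tail.length := List.toFinset_card_le _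
      _ = n := by simp [Walk.length_support, hlen]
  · have hu : u ∈ p.support := p.fst_mem_support_of_mem_edges (hedges s(u, w) huw)
    rw [Walk.mem_support_iff] at hu
    rcases hu with rfl | hu
    · simpa using Walk.end_mem_tail_support hcyc.not_nil
    · simpa using hu

section PerfectMatching

variable (hM : ∀ v, ∃! w, M.Adj v w)
include hM

theorem adj_iff_matchOf_eq {v w : V} : M.Adj v w ↔ matchOf M v = w := by
  have hex : ∃ w, M.Adj v w := (hM v).exists
  have hspec : M.Adj v (matchOf M v) := by
    rw [matchOf, dif_pos hex]; exact hex.choose_spec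
  exact ⟨fun h => (hM v).unique hspec h, fun h => h ▸ hspec⟩

theorem matchOf_adj (v : V) : M.Adj v (matchOf M v) :=
  (adj_iff_matchOf_eq hM).2 rfl

theorem matchOf_matchOf (v : V) : matchOf M (matchOf M v) = v :=
  (adj_iff_matchOf_eq hM).1 (matchOf_adj hM v).symm

theorem matchOf_ne_self (v : V) : matchOf M v ≠ v :=
  (matchOf_adj hM v).ne'

theorem existsUnique_comap_adj (f : W ≃ V) (v : W) : ∃! w, (M.comap f).Adj v w := by
  refine ⟨f.symm (matchOf M (f v)), by simpa using matchOf_adj hM (f v), fun w hw => ?_⟩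
  have hw : M.Adj (f v) (f w) := hw
  rw [adj_iff_matchOf_eq hM] at hw
  rw [hw, Equiv.symm_apply_apply]

theorem matchOf_comap (f : W ≃ V) (v : W) :
    matchOf (M.comap f) v = f.symm (matchOf M (f v)) :=
  ((adj_iff_matchOf_eq (existsUnique_comap_adj hM f)).1 (by simpa using matchOf_adj hM (f v)))

theorem insertEdge_eq_comap_swap [DecidableEq V] {x y : V} (hxy : x ≠ y) :
    insertEdge M s(x, y) = M.comap (Equiv.swap y (matchOf M x)) := by
  have hinv := matchOf_matchOf hM
  have hne := matchOf_ne_self hM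
  by_cases hadj : M.Adj x y
  · rw [insertEdge, if_pos (show s(x, y) ∈ M.edgeSet from hadj), (adj_iff_matchOf_eq hM).1 hadj,
      Equiv.swap_self]
    rfl
  · rw [adj_iff_matchOf_eq hM] at hadj
    ext u v
    simp only [insertEdge, mem_edgeSet, adj_iff_matchOf_eq hM, hadj, if_false, fromEdgeSet_adj,
      comap_adj, Set.mem_union, Set.mem_ofPred_eq, Set.mem_insert_iff, Set.mem_singleton_iff,
      Sym2.map_mk, Sym2.mem_iff, Sym2.eq_iff, Equiv.swap_apply_def]
    grind

theorem existsUnique_insertEdge_adj {x y : V} (hxy : x ≠ y) (v : V) :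
    ∃! w, (insertEdge M s(x, y)).Adj v w := by
  classical
  rw [insertEdge_eq_comap_swap hM hxy]
  exact existsUnique_comap_adj hM _ v

theorem matchOf_insertEdge [DecidableEq V] {x y : V} (hxy : x ≠ y) (v : V) :
    matchOf (insertEdge M s(x, y)) v =
      Equiv.swap y (matchOf M x) (matchOf M (Equiv.swap y (matchOf M x) v)) := by
  rw [insertEdge_eq_comap_swap hM hxy, matchOf_comap hM, Equiv.symm_swap]

end PerfectMatching

section TwoPerfectMatchings

variable (hM₁ : ∀ v, ∃! w, M₁.Adj v w) (hM₂ : ∀ v, ∃! w, M₂.Adj v w)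
include hM₁ hM₂

theorem mem_support_symmDiff_iff {u : V} :
    u ∈ (symmDiff M₁ M₂).support ↔ matchOf M₁ u ≠ matchOf M₂ u := by
  simp only [mem_support, symmDiff_adj, adj_iff_matchOf_eq hM₁, adj_iff_matchOf_eq hM₂]
  grind

theorem matchOf_mem_support_symmDiff {u : V} (hu : u ∈ (symmDiff M₁ M₂).support) :
    matchOf M₁ u ∈ (symmDiff M₁ M₂).support := by
  rw [mem_support_symmDiff_iff hM₁ hM₂] at hu ⊢
  intro h
  apply hu
  rw [← matchOf_matchOf hM₂ (matchOf M₁ u), ← h, matchOf_matchOf hM₁]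

theorem support_symmDiff_insertEdge_subset [DecidableEq V] {x y : V} (hxy : x ≠ y)
    (hx : x ∈ (symmDiff M₁ M₂).support) (hy : y ∈ (symmDiff M₁ M₂).support) :
    (symmDiff (insertEdge M₁ s(x, y)) (insertEdge M₂ s(x, y))).support ⊆
      (symmDiff M₁ M₂).support \ {x, y} := by
  intro u hu
  rw [mem_support_symmDiff_iff (existsUnique_insertEdge_adj hM₁ hxy)
    (existsUnique_insertEdge_adj hM₂ hxy), matchOf_insertEdge hM₁ hxy,
    matchOf_insertEdge hM₂ hxy] at hu
  have hS := fun u => mem_support_symmDiff_iff hM₁ hM₂ (u := u)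
  have hinv₁ := matchOf_matchOf hM₁
  have hinv₂ := matchOf_matchOf hM₂
  have hne₁ := matchOf_ne_self hM₁
  have hne₂ := matchOf_ne_self hM₂
  -- The support of `M₁ ∆ M₂` is closed under both partner maps, so off it both transpositions
  -- fix `u` and its partner.
  simp only [Equiv.swap_apply_def] at hu
  simp only [Set.mem_sdiff, Set.mem_insert_iff, Set.mem_singleton_iff]
  grind

theorem eq_of_support_symmDiff_subset {F : Finset V} (hF : (symmDiff M₁ M₂).support ⊆ F)
    (hcard : F.card ≤ 2) : M₁ = M₂ := by
  classical
  by_contra hne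
  obtain ⟨z, w, hzw⟩ := ne_bot_iff_exists_adj.1 (mt symmDiff_eq_bot.1 hne)
  have hz : z ∈ (symmDiff M₁ M₂).support := ⟨w, hzw⟩
  have hz₁ : matchOf M₁ z ∈ (symmDiff M₁ M₂).support := matchOf_mem_support_symmDiff hM₁ hM₂ hz
  have hz₂ : matchOf M₂ z ∈ (symmDiff M₁ M₂).support := by
    rw [symmDiff_comm] at hz ⊢
    exact matchOf_mem_support_symmDiff hM₂ hM₁ hz
  have hnodup : [z, matchOf M₁ z, matchOf M₂ z].Nodup := by
    simp only [List.nodup_cons, List.mem_cons, List.not_mem_nil, List.nodup_nil, or_false,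
      not_false_eq_true, and_true, not_or]
    exact ⟨⟨(matchOf_ne_self hM₁ z).symm, (matchOf_ne_self hM₂ z).symm⟩,
      (mem_support_symmDiff_iff hM₁ hM₂).1 hz⟩
  have hsubF : [z, matchOf M₁ z, matchOf M₂ z].toFinset ⊆ F := by
    intro u hu
    simp only [List.mem_toFinset, List.mem_cons, List.not_mem_nil, or_false] at hu
    rcases hu with rfl | rfl | rfl
    exacts [hF hz, hF hz₁, hF hz₂]
  have := Finset.card_le_card hsubF
  rw [List.toFinset_card_of_nodup hnodup] at this
  simp only [List.length_cons, List.length_nil] at this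
  omega

theorem insertEdge_eq_of_mem_support [DecidableEq V] {F : Finset V}
    (hF : (symmDiff M₁ M₂).support ⊆ F) (hcard : F.card ≤ 4) {x y : V} (hxy : x ≠ y)
    (hx : x ∈ (symmDiff M₁ M₂).support) (hy : y ∈ (symmDiff M₁ M₂).support) :
    insertEdge M₁ s(x, y) = insertEdge M₂ s(x, y) := by
  refine eq_of_support_symmDiff_subset (existsUnique_insertEdge_adj hM₁ hxy)
    (existsUnique_insertEdge_adj hM₂ hxy) (F := F \ {x, y}) (fun u hu => ?_) ?_
  · obtain ⟨huS, hxy'⟩ := support_symmDiff_insertEdge_subset hM₁ hM₂ hxy hx hy hu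
    simpa [hF huS] using hxy'
  · have hpair : ({x, y} : Finset V) ⊆ F := by
      simp only [Finset.insert_subset_iff, Finset.singleton_subset_iff]
      exact ⟨hF hx, hF hy⟩
    rw [Finset.card_sdiff_of_subset hpair, Finset.card_pair hxy]
    omega

end TwoPerfectMatchings

theorem matchAdj_comap {n : ℕ} {M₁ M₂ : SimpleGraph (Fin n)} (f : Fin n ≃ Fin n)
    (h : MatchAdj M₁ M₂) : MatchAdj (M₁.comap f) (M₂.comap f) := by
  refine ⟨fun heq => h.1 ?_, ?_⟩
  · simpa only [comap_comap, Equiv.self_comp_symm, comap_id] using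
      congrArg (SimpleGraph.comap f.symm) heq
  · rw [← comap_symmDiff]
    exact h.2.comap f

theorem matchAdj_insertEdge_of_notMem_support {n : ℕ} {M₁ M₂ : SimpleGraph (Fin n)}
    (hM₁ : ∀ v, ∃! w, M₁.Adj v w) (hM₂ : ∀ v, ∃! w, M₂.Adj v w) (h : MatchAdj M₁ M₂)
    {x y : Fin n} (hxy : x ≠ y) (hx : x ∉ (symmDiff M₁ M₂).support) :
    MatchAdj (insertEdge M₁ s(x, y)) (insertEdge M₂ s(x, y)) := by
  have hx₂ : matchOf M₂ x = matchOf M₁ x :=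
    not_not.1 fun hne => hx ((mem_support_symmDiff_iff hM₁ hM₂).2 (Ne.symm hne))
  rw [insertEdge_eq_comap_swap hM₁ hxy, insertEdge_eq_comap_swap hM₂ hxy, hx₂]
  exact matchAdj_comap _ h

end SimpleGraph

/-- Let `M₁ ~ M₂` be adjacent perfect matchings of `K_{2m}`, with symmetric
difference the 4-cycle `C`, and let `e = {v₁, v₂}` be an edge of `K_{2m}`.
If `e` is incident with two vertices of `C` then `M₁ * e = M₂ * e`; otherwise
`M₁ * e` and `M₂ * e` are adjacent in `𝒫ₘ`. -/
theorem stmt7 (m : ℕ) (M₁ M₂ : PMVertex m) (h : (matchingGraph m).Adj M₁ M₂)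
    (v₁ v₂ : Fin (2 * m)) (hv : v₁ ≠ v₂) :
    (v₁ ∈ (symmDiff M₁.1 M₂.1).support ∧ v₂ ∈ (symmDiff M₁.1 M₂.1).support →
      insertEdge M₁.1 s(v₁, v₂) = insertEdge M₂.1 s(v₁, v₂)) ∧
    (¬(v₁ ∈ (symmDiff M₁.1 M₂.1).support ∧ v₂ ∈ (symmDiff M₁.1 M₂.1).support) →
      MatchAdj (insertEdge M₁.1 s(v₁, v₂)) (insertEdge M₂.1 s(v₁, v₂))) := by
  have hadj : MatchAdj M₁.1 M₂.1 := h
  obtain ⟨F, hcard, hF⟩ := hadj.2.exists_finset_support_subset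
  refine ⟨fun ⟨h₁, h₂⟩ => insertEdge_eq_of_mem_support M₁.2 M₂.2 hF hcard hv h₁ h₂,
    fun hnot => ?_⟩
  rcases not_and_or.1 hnot with h₁ | h₂
  · exact matchAdj_insertEdge_of_notMem_support M₁.2 M₂.2 hadj hv h₁
  · rw [Sym2.eq_swap]
    exact matchAdj_insertEdge_of_notMem_support M₁.2 M₂.2 hadj hv.symm h₂
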